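/- arXiv:2006.10551 — 6 statements merged into one kernel-verified Lean document; each statement's English description precedes it below -/
import Mathlib

section
/- Let α : ℝ → ℝ be continuous and let A(t) = ∫₀ᵗ α(s) ds be nonvanishing on an open interval I. Let c₅ ≠ 0 and define u(x,t) = -(3/c₅)·x·A(t)⁻³ on ℝ × I. Then with β(t) = -c₅·A(t)²·α(t) and δ(t) = c₆·α(t), u satisfies u_t + α(t)·u·u_{xxx} + δ(t)·u_x·u_{xx} + β(t)·u·u_x = 0 on ℝ × I, for every constant c₆. -/
/-! For the separable ansatz `u = x · g(t)` the dispersive terms vanish, since `u` is affine in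
`x`, and the equation collapses to the Riccati-type ODE `g' + β g² = 0`.  With `g = -(3/c₅) A⁻³`
one has `g' = (9/c₅) α A⁻⁴ = -β g²` by the fundamental theorem of calculus `A' = α`. -/

theorem iteratedDeriv_mul_const_of_two_le {𝕜 : Type*} [NontriviallyNormedField 𝕜] {n : ℕ}
    (hn : 2 ≤ n) (m x : 𝕜) : iteratedDeriv n (fun y => y * m) x = 0 := by
  obtain ⟨k, rfl⟩ := Nat.exists_eq_add_of_le' hn
  have hderiv : deriv (fun y : 𝕜 => y * m) = fun _ => m := by
    funext y
    simp
  rw [iteratedDeriv_succ', iteratedDeriv_succ', hderiv, deriv_const', iteratedDeriv_const]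
  simp

theorem rosenauHyman_residual_of_separable {α β δ g : ℝ → ℝ} {g' t : ℝ}
    (hg : HasDerivAt g g' t) (x : ℝ) :
    deriv (fun τ => x * g τ) t
        + α t * (x * g t) * iteratedDeriv 3 (fun y => y * g t) x
        + δ t * deriv (fun y => y * g t) x * iteratedDeriv 2 (fun y => y * g t) x
        + β t * (x * g t) * deriv (fun y => y * g t) x
      = x * (g' + β t * g t ^ 2) := by
  rw [(hg.const_mul x).deriv, iteratedDeriv_mul_const_of_two_le (by norm_num),
    iteratedDeriv_mul_const_of_two_le le_rfl, deriv_mul_const_field, deriv_id'']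
  ring

theorem HasDerivAt.inv_pow {𝕜 : Type*} [NontriviallyNormedField 𝕜] {f : 𝕜 → 𝕜} {f' t : 𝕜}
    (hf : HasDerivAt f f' t) (ht : f t ≠ 0) (n : ℕ) :
    HasDerivAt (fun τ => (f τ ^ n)⁻¹) (-n * f' / f t ^ (n + 1)) t := by
  refine ((hf.pow n).inv (pow_ne_zero n ht)).congr_deriv ?_
  rcases n with _ | n
  · simp
  · simp only [Pi.pow_apply, Nat.add_sub_cancel]
    field_simp
    ring

theorem stmt_4_general (α : ℝ → ℝ) (hα : Continuous α)
    (A : ℝ → ℝ) (hA : A = fun t => ∫ s in (0:ℝ)..t, α s)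
    (a b : ℝ) (hA0 : ∀ t ∈ Set.Ioo a b, A t ≠ 0)
    (c₅ : ℝ)
    (u : ℝ → ℝ → ℝ) (hu : u = fun x t => -(3 / c₅) * x * ((A t) ^ 3)⁻¹)
    (β δ : ℝ → ℝ)
    (hβ : β = fun t => -c₅ * (A t) ^ 2 * α t) :
    ∀ x : ℝ, ∀ t ∈ Set.Ioo a b,
      deriv (fun τ => u x τ) t
        + α t * u x t * iteratedDeriv 3 (fun y => u y t) x
        + δ t * deriv (fun y => u y t) x * iteratedDeriv 2 (fun y => u y t) x
        + β t * u x t * deriv (fun y => u y t) x = 0 := by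
  intro x t ht
  set g : ℝ → ℝ := fun τ => -(3 / c₅) * (A τ ^ 3)⁻¹ with hg
  have hu_sep : u = fun x τ => x * g τ := by
    rw [hu]
    funext x τ
    ring
  have hAt : A t ≠ 0 := hA0 t ht
  have hA' : HasDerivAt A (α t) t := by
    rw [hA]
    exact (hα.integral_hasStrictDerivAt 0 t).hasDerivAt
  have hg' : HasDerivAt g (-(3 / c₅) * (-3 * α t / A t ^ (3 + 1))) t :=
    (hA'.inv_pow hAt 3).const_mul _
  rw [hu_sep, rosenauHyman_residual_of_separable hg', hβ, hg]
  field_simp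
  ring

theorem stmt_4 (α : ℝ → ℝ) (hα : Continuous α)
    (A : ℝ → ℝ) (hA : A = fun t => ∫ s in (0:ℝ)..t, α s)
    (a b : ℝ) (hA0 : ∀ t ∈ Set.Ioo a b, A t ≠ 0)
    (c₅ : ℝ) (hc₅ : c₅ ≠ 0) (c₆ : ℝ)
    (u : ℝ → ℝ → ℝ) (hu : u = fun x t => -(3 / c₅) * x * ((A t) ^ 3)⁻¹)
    (β δ : ℝ → ℝ)
    (hβ : β = fun t => -c₅ * (A t) ^ 2 * α t)
    (hδ : δ = fun t => c₆ * α t) :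
    ∀ x : ℝ, ∀ t ∈ Set.Ioo a b,
      deriv (fun τ => u x τ) t
        + α t * u x t * iteratedDeriv 3 (fun y => u y t) x
        + δ t * deriv (fun y => u y t) x * iteratedDeriv 2 (fun y => u y t) x
        + β t * u x t * deriv (fun y => u y t) x = 0 :=
  stmt_4_general α hα A hA a b hA0 c₅ u hu β δ hβ
end

section
/- Let u : ℝ² → ℝ be a smooth solution of u_t + α(t)·u·u_{xxx} + δ(t)·u_x·u_{xx} + β(t)·u·u_x = 0, where α, β, δ : ℝ → ℝ are smooth. Define C^t = u and C^x = α(t)·u·u_{xx} − (1/2)·α(t)·u_x² + (1/2)·δ(t)·u_x² + (1/2)·β(t)·u². Then D_t C^t + D_x C^x = 0 on ℝ², where D_t and D_x denote total derivatives (i.e., ∂/∂t and ∂/∂x applied to the composed functions of (x,t)). -/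
theorem stmt_7 (α β δ : ℝ → ℝ) (hα : ContDiff ℝ (⊤ : ℕ∞) α) (hβ : ContDiff ℝ (⊤ : ℕ∞) β)
    (hδ : ContDiff ℝ (⊤ : ℕ∞) δ)
    (u : ℝ → ℝ → ℝ) (hu : ContDiff ℝ (⊤ : ℕ∞) (fun p : ℝ × ℝ => u p.1 p.2))
    (hpde : ∀ x t : ℝ,
      deriv (fun τ => u x τ) t
        + α t * u x t * iteratedDeriv 3 (fun y => u y t) x
        + δ t * deriv (fun y => u y t) x * iteratedDeriv 2 (fun y => u y t) x
        + β t * u x t * deriv (fun y => u y t) x = 0)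
    (Ct Cx : ℝ → ℝ → ℝ)
    (hCt : Ct = fun x t => u x t)
    (hCx : Cx = fun x t =>
      α t * u x t * iteratedDeriv 2 (fun y => u y t) x
        - (1/2) * α t * (deriv (fun y => u y t) x) ^ 2
        + (1/2) * δ t * (deriv (fun y => u y t) x) ^ 2
        + (1/2) * β t * (u x t) ^ 2) :
    ∀ x t : ℝ,
      deriv (fun τ => Ct x τ) t + deriv (fun y => Cx y t) x = 0 := by
  intro x t
  subst hCt hCx
  set f : ℝ → ℝ := fun y => u y t with hfdef
  have hf : ContDiff ℝ (⊤ : ℕ∞) f := by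
    have : f = (fun p : ℝ × ℝ => u p.1 p.2) ∘ (fun y => (y, t)) := rfl
    rw [this]
    exact hu.comp (ContDiff.prodMk contDiff_id contDiff_const)
  have hf' : ContDiff ℝ (⊤ : ℕ∞) f := hf.of_le (by simp)
  have hdf : ContDiff ℝ (⊤ : ℕ∞) (deriv f) := (contDiff_infty_iff_deriv.mp hf').2
  have hd2f : ContDiff ℝ (⊤ : ℕ∞) (iteratedDeriv 2 f) := by
    have : iteratedDeriv 2 f = deriv (deriv f) := by
      rw [iteratedDeriv_succ, iteratedDeriv_one]
    rw [this]; exact (contDiff_infty_iff_deriv.mp hdf).2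
  have hf1 : HasDerivAt f (deriv f x) x :=
    ((hf'.differentiable (by norm_num)) x).hasDerivAt
  have hg1 : HasDerivAt (deriv f) (iteratedDeriv 2 f x) x := by
    have := ((hdf.differentiable (by norm_num)) x).hasDerivAt
    have h2 : iteratedDeriv 2 f = deriv (deriv f) := by
      rw [iteratedDeriv_succ, iteratedDeriv_one]
    rw [h2]; exact this
  have hg2 : HasDerivAt (iteratedDeriv 2 f) (iteratedDeriv 3 f x) x := by
    have := ((hd2f.differentiable (by norm_num)) x).hasDerivAt
    have h3 : iteratedDeriv 3 f = deriv (iteratedDeriv 2 f) := iteratedDeriv_succ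
    rw [h3]; exact this
  have H1 : HasDerivAt (fun y => α t * f y * iteratedDeriv 2 f y)
      (α t * deriv f x * iteratedDeriv 2 f x + α t * f x * iteratedDeriv 3 f x) x := by
    have := (hf1.const_mul (α t)).mul hg2
    exact this.congr_deriv (by ring)
  have H2 : HasDerivAt (fun y => (1/2) * α t * (deriv f y) ^ 2)
      (α t * deriv f x * iteratedDeriv 2 f x) x := by
    have := (hg1.pow 2).const_mul ((1/2) * α t)
    exact this.congr_deriv (by ring)
  have H3 : HasDerivAt (fun y => (1/2) * δ t * (deriv f y) ^ 2)
      (δ t * deriv f x * iteratedDeriv 2 f x) x := by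
    have := (hg1.pow 2).const_mul ((1/2) * δ t)
    exact this.congr_deriv (by ring)
  have H4 : HasDerivAt (fun y => (1/2) * β t * (f y) ^ 2)
      (β t * f x * deriv f x) x := by
    have := (hf1.pow 2).const_mul ((1/2) * β t)
    exact this.congr_deriv (by ring)
  have H : HasDerivAt (fun y =>
      α t * f y * iteratedDeriv 2 f y
        - (1/2) * α t * (deriv f y) ^ 2
        + (1/2) * δ t * (deriv f y) ^ 2
        + (1/2) * β t * (f y) ^ 2)
      (α t * f x * iteratedDeriv 3 f x
        + δ t * deriv f x * iteratedDeriv 2 f x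
        + β t * f x * deriv f x) x := by
    have := ((H1.sub H2).add H3).add H4
    exact this.congr_deriv (by ring)
  have hD := H.deriv
  simp only [hfdef] at hD ⊢
  rw [hD]
  have := hpde x t
  linarith
end

section
/- Let α : ℝ → ℝ be smooth and set δ = α. Let u : ℝ² → ℝ be a smooth positive solution of u_t + α(t)·u·u_{xxx} + α(t)·u_x·u_{xx} + β(t)·u·u_x = 0 for a smooth β. Define C^t = u·(ln u − 1) and C^x = α(t)·(ln u)·u·u_{xx} − (1/2)·α(t)·u_x² + β(t)·((1/2)·u²·ln u − (1/4)·u²). Then ∂_t C^t + ∂_x C^x = 0 on ℝ². -/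
theorem stmt_9 (α β : ℝ → ℝ) (hα : ContDiff ℝ (⊤ : ℕ∞) α) (hβ : ContDiff ℝ (⊤ : ℕ∞) β)
    (u : ℝ → ℝ → ℝ) (hu : ContDiff ℝ (⊤ : ℕ∞) (fun p : ℝ × ℝ => u p.1 p.2))
    (hupos : ∀ x t : ℝ, 0 < u x t)
    (hpde : ∀ x t : ℝ,
      deriv (fun τ => u x τ) t
        + α t * u x t * iteratedDeriv 3 (fun y => u y t) x
        + α t * deriv (fun y => u y t) x * iteratedDeriv 2 (fun y => u y t) x
        + β t * u x t * deriv (fun y => u y t) x = 0)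
    (Ct Cx : ℝ → ℝ → ℝ)
    (hCt : Ct = fun x t => u x t * (Real.log (u x t) - 1))
    (hCx : Cx = fun x t =>
      α t * Real.log (u x t) * u x t * iteratedDeriv 2 (fun y => u y t) x
        - (1/2) * α t * (deriv (fun y => u y t) x) ^ 2
        + β t * ((1/2) * (u x t) ^ 2 * Real.log (u x t) - (1/4) * (u x t) ^ 2)) :
    ∀ x t : ℝ,
      deriv (fun τ => Ct x τ) t + deriv (fun y => Cx y t) x = 0 := by
  intro x t
  have hUne : u x t ≠ 0 := (hupos x t).ne'
  -- spatial slice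
  have hf : ContDiff ℝ (⊤ : ℕ∞) (fun y => u y t) := hu.comp (contDiff_id.prodMk contDiff_const)
  have hg : ContDiff ℝ (⊤ : ℕ∞) (fun τ => u x τ) := hu.comp (contDiff_const.prodMk contDiff_id)
  have hf' : ContDiff ℝ ((⊤ : ℕ∞) : WithTop ℕ∞) (fun y => u y t) := hf.of_le (by simp)
  have hf1 : ContDiff ℝ ((⊤ : ℕ∞) : WithTop ℕ∞) (deriv (fun y => u y t)) := (contDiff_infty_iff_deriv.mp hf').2
  have hf2 : ContDiff ℝ ((⊤ : ℕ∞) : WithTop ℕ∞) (deriv (deriv (fun y => u y t))) := (contDiff_infty_iff_deriv.mp hf1).2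
  have e2 : iteratedDeriv 2 (fun y => u y t) = deriv (deriv (fun y => u y t)) := by
    rw [iteratedDeriv_succ, iteratedDeriv_one]
  have e3 : iteratedDeriv 3 (fun y => u y t) = deriv (deriv (deriv (fun y => u y t))) := by
    rw [iteratedDeriv_succ, e2]
  have hF : HasDerivAt (fun y => u y t) (deriv (fun y => u y t) x) x :=
    (hf'.differentiable (by simp) x).hasDerivAt
  have hF1 : HasDerivAt (deriv (fun y => u y t)) (deriv (deriv (fun y => u y t)) x) x :=
    (hf1.differentiable (by simp) x).hasDerivAt
  have hF2 : HasDerivAt (deriv (deriv (fun y => u y t))) (deriv (deriv (deriv (fun y => u y t))) x) x :=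
    (hf2.differentiable (by simp) x).hasDerivAt
  have hI2 : HasDerivAt (iteratedDeriv 2 (fun y => u y t)) (iteratedDeriv 3 (fun y => u y t) x) x := by
    rw [e2, e3]; exact hF2
  have hL : HasDerivAt (fun y => Real.log (u y t)) (deriv (fun y => u y t) x / u x t) x :=
    hF.log hUne
  -- time slice
  have hG : HasDerivAt (fun τ => u x τ) (deriv (fun τ => u x τ) t) t :=
    ((hg.of_le (by simp) : ContDiff ℝ ((⊤ : ℕ∞) : WithTop ℕ∞) _).differentiable (by simp) t).hasDerivAt
  have hGlog : HasDerivAt (fun τ => Real.log (u x τ)) (deriv (fun τ => u x τ) t / u x t) t :=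
    hG.log hUne
  have hT : HasDerivAt (fun τ => u x τ * (Real.log (u x τ) - 1))
      (deriv (fun τ => u x τ) t * (Real.log (u x t) - 1)
        + u x t * (deriv (fun τ => u x τ) t / u x t)) t :=
    hG.mul (hGlog.sub_const 1)
  -- spatial derivative of Cx slice
  have hA : HasDerivAt (fun y => α t * Real.log (u y t) * u y t * iteratedDeriv 2 (fun y => u y t) y)
      ((α t * (deriv (fun y => u y t) x / u x t) * u x t
          + α t * Real.log (u x t) * deriv (fun y => u y t) x) * iteratedDeriv 2 (fun y => u y t) x
        + α t * Real.log (u x t) * u x t * iteratedDeriv 3 (fun y => u y t) x) x :=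
    ((hL.const_mul (α t)).mul hF).mul hI2
  have hB : HasDerivAt (fun y => 1 / 2 * α t * deriv (fun y => u y t) y ^ 2)
      (1 / 2 * α t * (2 * deriv (fun y => u y t) x ^ 1 * deriv (deriv (fun y => u y t)) x)) x :=
    (hF1.pow 2).const_mul (1 / 2 * α t)
  have hC : HasDerivAt (fun y =>
        β t * (1 / 2 * u y t ^ 2 * Real.log (u y t) - 1 / 4 * u y t ^ 2))
      (β t * ((1 / 2 * (2 * u x t ^ 1 * deriv (fun y => u y t) x)) * Real.log (u x t)
          + 1 / 2 * u x t ^ 2 * (deriv (fun y => u y t) x / u x t)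
          - 1 / 4 * (2 * u x t ^ 1 * deriv (fun y => u y t) x))) x :=
    ((((hF.pow 2).const_mul (1 / 2)).mul hL).sub ((hF.pow 2).const_mul (1 / 4))).const_mul (β t)
  have hX : HasDerivAt (fun y => α t * Real.log (u y t) * u y t * iteratedDeriv 2 (fun y => u y t) y - 1 / 2 * α t * deriv (fun y => u y t) y ^ 2 + β t * (1 / 2 * u y t ^ 2 * Real.log (u y t) - 1 / 4 * u y t ^ 2)) _ x := (hA.sub hB).add hC
  have key := hpde x t
  simp only [hCt, hCx]
  rw [hT.deriv, hX.deriv]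
  have h2 : iteratedDeriv 2 (fun y => u y t) x = deriv (deriv (fun y => u y t)) x := by rw [e2]
  have c1 : u x t * (deriv (fun τ => u x τ) t / u x t) = deriv (fun τ => u x τ) t := by
    field_simp
  have c2 : α t * (deriv (fun y => u y t) x / u x t) * u x t = α t * deriv (fun y => u y t) x := by
    field_simp
  have c3 : 1 / 2 * u x t ^ 2 * (deriv (fun y => u y t) x / u x t)
      = 1 / 2 * u x t * deriv (fun y => u y t) x := by
    field_simp
  rw [c1, c2, c3, ← h2]
  linear_combination Real.log (u x t) * key
end

section
/- Let α, δ : ℝ → ℝ be smooth with α = δ/3, and let β : ℝ → ℝ be smooth. Let u : ℝ² → ℝ be a smooth solution of u_t + α(t)·u·u_{xxx} + δ(t)·u_x·u_{xx} + β(t)·u·u_x = 0. Define C^t = u³/3 and C^x = α(t)·u³·u_{xx} + (β(t)/4)·u⁴. Then ∂_t C^t + ∂_x C^x = 0 on ℝ². -/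
theorem stmt_12 (α δ β : ℝ → ℝ) (hδ : ContDiff ℝ (⊤ : ℕ∞) δ) (hβ : ContDiff ℝ (⊤ : ℕ∞) β)
    (hα : α = fun t => δ t / 3)
    (u : ℝ → ℝ → ℝ) (hu : ContDiff ℝ (⊤ : ℕ∞) (fun p : ℝ × ℝ => u p.1 p.2))
    (hpde : ∀ x t : ℝ,
      deriv (fun τ => u x τ) t
        + α t * u x t * iteratedDeriv 3 (fun y => u y t) x
        + δ t * deriv (fun y => u y t) x * iteratedDeriv 2 (fun y => u y t) x
        + β t * u x t * deriv (fun y => u y t) x = 0)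
    (Ct Cx : ℝ → ℝ → ℝ)
    (hCt : Ct = fun x t => (u x t) ^ 3 / 3)
    (hCx : Cx = fun x t =>
      α t * (u x t) ^ 3 * iteratedDeriv 2 (fun y => u y t) x
        + (β t / 4) * (u x t) ^ 4) :
    ∀ x t : ℝ,
      deriv (fun τ => Ct x τ) t + deriv (fun y => Cx y t) x = 0 := by
  intro x t
  subst hCt hCx hα
  have hf : ContDiff ℝ (⊤ : ℕ∞) (fun y => u y t) :=
    hu.comp (ContDiff.prodMk contDiff_id contDiff_const)
  have hg : ContDiff ℝ (⊤ : ℕ∞) (fun τ => u x τ) :=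
    hu.comp (ContDiff.prodMk contDiff_const contDiff_id)
  have hfd : Differentiable ℝ (fun y => u y t) := hf.differentiable (by simp)
  have hgd : Differentiable ℝ (fun τ => u x τ) := hg.differentiable (by simp)
  have hD2 : Differentiable ℝ (iteratedDeriv 2 (fun y => u y t)) := by
    apply hf.differentiable_iteratedDeriv
    exact WithTop.coe_lt_coe.2 (lt_top_iff_ne_top.2 (by simp : (2 : ℕ∞) ≠ ⊤))
  -- time derivative
  have h1 : deriv (fun τ => u x τ ^ 3 / 3) t
      = u x t ^ 2 * deriv (fun τ => u x τ) t := by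
    rw [deriv_div_const, deriv_fun_pow (hgd t) _]
    ring
  -- space derivative
  have hcube : Differentiable ℝ (fun y => u y t ^ 3) := hfd.pow 3
  have hprod : Differentiable ℝ
      (fun y => u y t ^ 3 * iteratedDeriv 2 (fun z => u z t) y) := hcube.mul hD2
  have hquart : Differentiable ℝ (fun y => u y t ^ 4) := hfd.pow 4
  have h3 : iteratedDeriv 3 (fun y => u y t)
      = deriv (iteratedDeriv 2 (fun y => u y t)) := iteratedDeriv_succ
  have h2 : deriv (fun y =>
      (fun s => δ s / 3) t * u y t ^ 3 * iteratedDeriv 2 (fun z => u z t) y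
        + β t / 4 * u y t ^ 4) x
      = δ t / 3 * (3 * u x t ^ 2 * deriv (fun y => u y t) x
            * iteratedDeriv 2 (fun y => u y t) x
          + u x t ^ 3 * iteratedDeriv 3 (fun y => u y t) x)
        + β t * u x t ^ 3 * deriv (fun y => u y t) x := by
    have key : (fun y =>
        (fun s => δ s / 3) t * u y t ^ 3 * iteratedDeriv 2 (fun z => u z t) y
          + β t / 4 * u y t ^ 4)
        = fun y => δ t / 3 * (u y t ^ 3 * iteratedDeriv 2 (fun z => u z t) y)
          + β t / 4 * u y t ^ 4 := by
      funext y; ring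
    rw [key, deriv_fun_add ((hprod.const_mul _) x) ((hquart.const_mul _) x),
      deriv_const_mul _ (hprod x), deriv_fun_mul (hcube x) (hD2 x),
      deriv_fun_pow (hfd x) _, deriv_const_mul _ (hquart x),
      deriv_fun_pow (hfd x) _, h3]
    ring
  rw [h1, h2]
  have hp := hpde x t
  nlinarith [hp, sq_nonneg (u x t)]
end

section
/- Let α : ℝ → ℝ be continuous with antiderivative A(t) = ∫₀ᵗ α(s) ds nonvanishing on an open interval I, and let f : ℝ → ℝ be three times continuously differentiable and satisfy -4f(ζ) + ζ·f'(ζ) + f(ζ)·f'''(ζ) − c₅·f(ζ)·f'(ζ) + c₆·f'(ζ)·f''(ζ) = 0 for all ζ ∈ ℝ. Define u(x,t) = A(t)^{-4}·f(x·A(t)) on ℝ × I, β(t) = −c₅·A(t)²·α(t), δ(t) = c₆·α(t). Then u satisfies u_t + α(t)·u·u_{xxx} + δ(t)·u_x·u_{xx} + β(t)·u·u_x = 0 on ℝ × I. -/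
/-! With ζ = x A(t) and A' = α, the chain rule gives u_t = α A⁻⁵ (ζ f' - 4 f) and
∂ₓⁿ u = Aⁿ⁻⁴ f⁽ⁿ⁾(ζ); every term of the equation thus carries the common factor α A⁻⁵, and
what remains is exactly the profile equation for f at ζ. -/

theorem iteratedDeriv_comp_mul_const {𝕜 : Type*} [NontriviallyNormedField 𝕜] {n : ℕ}
    {f : 𝕜 → 𝕜} (hf : ContDiff 𝕜 n f) (c : 𝕜) :
    iteratedDeriv n (fun x => f (x * c)) = fun x => c ^ n * iteratedDeriv n f (x * c) := by
  simpa only [mul_comm _ c] using iteratedDeriv_comp_const_mul hf c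

theorem hasDerivAt_inv_pow_mul_comp_mul {A f : ℝ → ℝ} {a t : ℝ} (hA : HasDerivAt A a t)
    (hAt : A t ≠ 0) (p : ℕ) (x : ℝ) (hf : DifferentiableAt ℝ f (x * A t)) :
    HasDerivAt (fun τ => (A τ ^ p)⁻¹ * f (x * A τ))
      (a / A t ^ (p + 1) * (x * A t * deriv f (x * A t) - p * f (x * A t))) t := by
  have hcomp : HasDerivAt (fun τ => f (x * A τ)) (deriv f (x * A t) * (x * a)) t :=
    hf.hasDerivAt.comp t (hA.const_mul x)
  refine (((hA.fun_pow p).fun_inv (pow_ne_zero p hAt)).fun_mul hcomp).congr_deriv ?_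
  rcases p with _ | q
  · field_simp
    ring
  · simp only [Nat.add_sub_cancel, Nat.cast_add, Nat.cast_one]
    field_simp
    ring

theorem stmt_14 (α : ℝ → ℝ) (hα : Continuous α)
    (A : ℝ → ℝ) (hA : A = fun t => ∫ s in (0:ℝ)..t, α s)
    (a b : ℝ) (hA0 : ∀ t ∈ Set.Ioo a b, A t ≠ 0)
    (c₅ c₆ : ℝ)
    (f : ℝ → ℝ) (hf : ContDiff ℝ 3 f)
    (hode : ∀ ζ : ℝ,
      -4 * f ζ + ζ * deriv f ζ + f ζ * iteratedDeriv 3 f ζ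
        - c₅ * f ζ * deriv f ζ + c₆ * deriv f ζ * iteratedDeriv 2 f ζ = 0)
    (u : ℝ → ℝ → ℝ) (hu : u = fun x t => ((A t) ^ 4)⁻¹ * f (x * A t))
    (β δ : ℝ → ℝ)
    (hβ : β = fun t => -c₅ * (A t) ^ 2 * α t)
    (hδ : δ = fun t => c₆ * α t) :
    ∀ x : ℝ, ∀ t ∈ Set.Ioo a b,
      deriv (fun τ => u x τ) t
        + α t * u x t * iteratedDeriv 3 (fun y => u y t) x
        + δ t * deriv (fun y => u y t) x * iteratedDeriv 2 (fun y => u y t) x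
        + β t * u x t * deriv (fun y => u y t) x = 0 := by
  intro x t ht
  subst hu hβ hδ
  have hAt : HasDerivAt A (α t) t := hA ▸ (hα.integral_hasStrictDerivAt 0 t).hasDerivAt
  have h_ut := hasDerivAt_inv_pow_mul_comp_mul hAt (hA0 t ht) 4 x
    (hf.differentiable (by norm_num) _)
  have h_ux (n : ℕ) (hn : n ≤ 3) : iteratedDeriv n (fun y => (A t ^ 4)⁻¹ * f (y * A t)) x
      = (A t ^ 4)⁻¹ * (A t ^ n * iteratedDeriv n f (x * A t)) := by
    rw [iteratedDeriv_const_mul_field,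
      iteratedDeriv_comp_mul_const (hf.of_le (by exact_mod_cast hn))]
  have h_ux1 : deriv (fun y => (A t ^ 4)⁻¹ * f (y * A t)) x
      = (A t ^ 4)⁻¹ * (A t * deriv f (x * A t)) := by
    simpa only [iteratedDeriv_one, pow_one] using h_ux 1 (by norm_num)
  simp only [h_ut.deriv, h_ux1, h_ux 2 (by norm_num), h_ux 3 (by norm_num)]
  have hA := hA0 t ht
  linear_combination (norm := (field_simp; ring)) α t / A t ^ 5 * hode (x * A t)
end

section
/- Let f : ℝ → ℝ be continuous with antiderivative F(t) = ∫₀ᵗ f(s) ds, c₁, c₂, c₃, c₄, c₅ ∈ ℝ, and let g : ℝ → ℝ be three times continuously differentiable and satisfy -z·g'(z) + c₂·g(z) + c₃·g(z)·g'''(z) + c₄·g(z)·g'(z) + c₅·g'(z)·g''(z) = 0 for all z ∈ ℝ. Define u(x,t) = exp(c₂·F(t))·g((x + c₁)·exp(−F(t))), α(t) = c₃·f(t)·exp(−(c₂−3)·F(t)), β(t) = c₄·f(t)·exp(−(c₂−1)·F(t)), δ(t) = c₅·f(t)·exp(−(c₂−3)·F(t)). Then u satisfies u_t + α(t)·u·u_{xxx}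 + δ(t)·u_x·u_{xx} + β(t)·u·u_x = 0 on ℝ². -/
/-!
The ansatz `u = e^{c₂F(t)} g(z)` with `z = (x + c₁) e^{-F(t)}` turns each `x`-derivative into a
factor `e^{-F}` and gives `u_t = F'(t) e^{c₂F} (c₂ g(z) - z g'(z))`. The coefficients `α, β, δ`
are chosen so that every nonlinear term of the PDE also carries exactly the factor
`f(t) e^{c₂F}`, so the left-hand side equals `f(t) e^{c₂F(t)}` times the left-hand side of the ODE.
-/

open Real

lemma iteratedDeriv_const_mul_comp_add_mul {𝕜 : Type*} [NontriviallyNormedField 𝕜] {n : ℕ}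
    {G : 𝕜 → 𝕜} (hG : ContDiff 𝕜 n G) (a c k x : 𝕜) :
    iteratedDeriv n (fun y => a * G ((y + c) * k)) x
      = a * k ^ n * iteratedDeriv n G ((x + c) * k) := by
  have hscale :
      iteratedDeriv n (fun w => G (w * k)) = fun w => k ^ n * iteratedDeriv n G (w * k) := by
    simp_rw [mul_comm _ k]
    exact iteratedDeriv_comp_const_mul hG k
  rw [iteratedDeriv_const_mul_field, iteratedDeriv_comp_add_const n (fun w => G (w * k)) c,
    hscale, mul_assoc]

lemma hasDerivAt_exp_mul_comp_mul_exp_neg {F G : ℝ → ℝ} {φ t : ℝ} (hF : HasDerivAt F φ t)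
    (p x : ℝ) (hG : DifferentiableAt ℝ G (x * exp (-F t))) :
    HasDerivAt (fun τ => exp (p * F τ) * G (x * exp (-F τ)))
      (φ * exp (p * F t) * (p * G (x * exp (-F t)) - x * exp (-F t) * deriv G (x * exp (-F t))))
      t := by
  have hz : HasDerivAt (fun τ => x * exp (-F τ)) (x * (exp (-F t) * -φ)) t :=
    (hF.neg.exp).const_mul x
  refine (((hF.const_mul p).exp).mul (hG.hasDerivAt.comp t hz)).congr_deriv ?_
  rw [Function.comp_apply]
  ring

lemma exp_neg_sub_mul_mul_exp_mul_mul_exp_neg_pow (p s : ℝ) (n : ℕ) :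
    exp (-(p - n) * s) * exp (p * s) * exp (-s) ^ n = 1 := by
  rw [← exp_nat_mul, ← exp_add, ← exp_add, ← exp_zero]
  congr 1
  ring

theorem stmt_15 (f : ℝ → ℝ) (hf : Continuous f)
    (F : ℝ → ℝ) (hF : F = fun t => ∫ s in (0:ℝ)..t, f s)
    (c₁ c₂ c₃ c₄ c₅ : ℝ)
    (g : ℝ → ℝ) (hg : ContDiff ℝ 3 g)
    (hode : ∀ z : ℝ,
      -z * deriv g z + c₂ * g z + c₃ * g z * iteratedDeriv 3 g z
        + c₄ * g z * deriv g z + c₅ * deriv g z * iteratedDeriv 2 g z = 0)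
    (u : ℝ → ℝ → ℝ)
    (hu : u = fun x t => Real.exp (c₂ * F t) * g ((x + c₁) * Real.exp (-F t)))
    (α β δ : ℝ → ℝ)
    (hα : α = fun t => c₃ * f t * Real.exp (-(c₂ - 3) * F t))
    (hβ : β = fun t => c₄ * f t * Real.exp (-(c₂ - 1) * F t))
    (hδ : δ = fun t => c₅ * f t * Real.exp (-(c₂ - 3) * F t)) :
    ∀ x t : ℝ,
      deriv (fun τ => u x τ) t
        + α t * u x t * iteratedDeriv 3 (fun y => u y t) x
        + δ t * deriv (fun y => u y t) x * iteratedDeriv 2 (fun y => u y t) x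
        + β t * u x t * deriv (fun y => u y t) x = 0 := by
  intro x t
  subst hu hα hβ hδ
  have hF' : HasDerivAt F (f t) t := hF ▸
    intervalIntegral.integral_hasDerivAt_right (hf.intervalIntegrable 0 t)
      (hf.stronglyMeasurableAtFilter _ _) hf.continuousAt
  have hut := hasDerivAt_exp_mul_comp_mul_exp_neg hF' c₂ (x + c₁)
    ((hg.differentiable (by norm_num)).differentiableAt)
  have hexp₃ := exp_neg_sub_mul_mul_exp_mul_mul_exp_neg_pow c₂ (F t) 3
  have hexp₁ := exp_neg_sub_mul_mul_exp_mul_mul_exp_neg_pow c₂ (F t) 1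
  push_cast at hexp₃ hexp₁
  simp only [hut.deriv, ← iteratedDeriv_one,
    iteratedDeriv_const_mul_comp_add_mul (hg.of_le (by norm_num) : ContDiff ℝ (1 : ℕ) g),
    iteratedDeriv_const_mul_comp_add_mul (hg.of_le (by norm_num) : ContDiff ℝ (2 : ℕ) g),
    iteratedDeriv_const_mul_comp_add_mul (hg : ContDiff ℝ (3 : ℕ) g)]
  set E := exp (c₂ * F t)
  set z := (x + c₁) * exp (-F t)
  rw [iteratedDeriv_one]
  linear_combination (f t * E) * hode z
    + (c₃ * f t * E * g z * iteratedDeriv 3 g z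
      + c₅ * f t * E * deriv g z * iteratedDeriv 2 g z) * hexp₃
    + (c₄ * f t * E * g z * deriv g z) * hexp₁
end
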